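/- Let ⟨F, G, 𝔽, 𝔾, H_grd, F_exp, G_exp, θ⟩ be an interpolant lifting base, let 𝔽𝔾 = 𝔽 ∪ 𝔾, let {t₁,…,tₙ} be the set of the 𝔽𝔾-terms with an 𝔽𝔾-terms-maximal occurrence in H_grd, ordered such that if tᵢ is a strict subterm of tⱼ then i < j, let v₁,…,vₙ be fresh variables, let σ = {vᵢ ↦ tᵢ}, and for each i let Qᵢ = ∃ if tᵢ is an 𝔽-term and Qᵢ = ∀ if tᵢ is a 𝔾-term. Then F ⊨ Q₁v₁ … Qₙvₙ H_grd⁻σ. -/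

import Mathlib

open Classical

namespace CTIF

/-- First-order terms: variables and applications of function symbols
(a function symbol is a natural number used with an arity). -/
inductive Tm : Type where
  | var : ℕ → Tm
  | app : ℕ → (n : ℕ) → (Fin n → Tm) → Tm

/-- First-order formulas without equality. -/
inductive Fml : Type where
  | tru : Fml
  | fls : Fml
  | atom : ℕ → (n : ℕ) → (Fin n → Tm) → Fml
  | neg : Fml → Fml
  | conj : Fml → Fml → Fml
  | disj : Fml → Fml → Fml
  | all : ℕ → Fml → Fml
  | exi : ℕ → Fml → Fml

/-- A structure: interpretation of all function and predicate symbols (at every arity). -/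
structure Struc (D : Type) : Type where
  fn : ℕ → (n : ℕ) → (Fin n → D) → D
  pr : ℕ → (n : ℕ) → (Fin n → D) → Prop

def Tm.eval {D : Type} (M : Struc D) (a : ℕ → D) : Tm → D
  | .var x => a x
  | .app f n ts => M.fn f n (fun i => (ts i).eval M a)

def Fml.sat {D : Type} : Fml → Struc D → (ℕ → D) → Prop
  | .tru, _, _ => True
  | .fls, _, _ => False
  | .atom p n ts, M, a => M.pr p n (fun i => (ts i).eval M a)
  | .neg F, M, a => ¬ F.sat M a
  | .conj F G, M, a => F.sat M a ∧ G.sat M a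
  | .disj F G, M, a => F.sat M a ∨ G.sat M a
  | .all x F, M, a => ∀ d, F.sat M (Function.update a x d)
  | .exi x F, M, a => ∃ d, F.sat M (Function.update a x d)

/-- Entailment: every model (with any variable assignment) of `F` satisfies `G`. -/
def entails (F G : Fml) : Prop :=
  ∀ (D : Type), Nonempty D → ∀ (M : Struc D) (a : ℕ → D), F.sat M a → G.sat M a

def Tm.vars : Tm → Set ℕ
  | .var x => {x}
  | .app _ _ ts => ⋃ i, (ts i).vars

/-- Function symbols (with their arity) occurring in a term. -/
def Tm.funs : Tm → Set (ℕ × ℕ)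
  | .var _ => ∅
  | .app f n ts => insert (f, n) (⋃ i, (ts i).funs)

def Tm.isGround (t : Tm) : Prop := t.vars = ∅

/-- `t` is a ground term all of whose function symbols come from `S`. -/
def Tm.builtFrom (S : Set (ℕ × ℕ)) : Tm → Prop
  | .var _ => False
  | .app f n ts => (f, n) ∈ S ∧ ∀ i, Tm.builtFrom S (ts i)

/-- `t` occurs (as a subterm) in the given term. -/
def Tm.occursIn (t : Tm) : Tm → Prop
  | .var x => t = Tm.var x
  | .app f n ts => t = Tm.app f n ts ∨ ∃ i, Tm.occursIn t (ts i)

/-- `s` is a strict subterm of `t`. -/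
def Tm.strictSub (s t : Tm) : Prop := s ≠ t ∧ s.occursIn t

def Fml.funs : Fml → Set (ℕ × ℕ)
  | .tru => ∅
  | .fls => ∅
  | .atom _ _ ts => ⋃ i, (ts i).funs
  | .neg F => F.funs
  | .conj F G => F.funs ∪ G.funs
  | .disj F G => F.funs ∪ G.funs
  | .all _ F => F.funs
  | .exi _ F => F.funs

/-- Predicate symbols with the polarity (`true` = positive) of their occurrences;
the second argument is the polarity of the context. -/
def Fml.preds : Fml → Bool → Set (ℕ × Bool)
  | .tru, _ => ∅
  | .fls, _ => ∅
  | .atom p _ _, pol => {(p, pol)}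
  | .neg F, pol => F.preds (!pol)
  | .conj F G, pol => F.preds pol ∪ G.preds pol
  | .disj F G, pol => F.preds pol ∪ G.preds pol
  | .all _ F, pol => F.preds pol
  | .exi _ F, pol => F.preds pol

/-- pred(F): predicates paired with the polarities of their occurrences in `F`. -/
def Fml.pred (F : Fml) : Set (ℕ × Bool) := F.preds true

/-- Predicate symbols occurring in a formula (disregarding polarity). -/
def Fml.predSyms : Fml → Set ℕ
  | .tru => ∅
  | .fls => ∅
  | .atom p _ _ => {p}
  | .neg F => F.predSyms
  | .conj F G => F.predSyms ∪ G.predSyms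
  | .disj F G => F.predSyms ∪ G.predSyms
  | .all _ F => F.predSyms
  | .exi _ F => F.predSyms

def Fml.free : Fml → Set ℕ
  | .tru => ∅
  | .fls => ∅
  | .atom _ _ ts => ⋃ i, (ts i).vars
  | .neg F => F.free
  | .conj F G => F.free ∪ G.free
  | .disj F G => F.free ∪ G.free
  | .all x F => F.free \ {x}
  | .exi x F => F.free \ {x}

/-- Variables occurring bound (i.e. quantified upon) in a formula. -/
def Fml.bound : Fml → Set ℕ
  | .tru => ∅
  | .fls => ∅
  | .atom _ _ _ => ∅
  | .neg F => F.bound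
  | .conj F G => F.bound ∪ G.bound
  | .disj F G => F.bound ∪ G.bound
  | .all x F => insert x F.bound
  | .exi x F => insert x F.bound

def Fml.isQF : Fml → Prop
  | .tru => True
  | .fls => True
  | .atom _ _ _ => True
  | .neg F => F.isQF
  | .conj F G => F.isQF ∧ G.isQF
  | .disj F G => F.isQF ∧ G.isQF
  | .all _ _ => False
  | .exi _ _ => False

def Fml.isGround (F : Fml) : Prop := F.isQF ∧ F.free = ∅

def Fml.isSentence (F : Fml) : Prop := F.free = ∅

/-- Substitutions: mappings from variables to terms. -/
abbrev Subst := ℕ → Tm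

def Subst.dom (σ : Subst) : Set ℕ := {x | σ x ≠ Tm.var x}

def Subst.rng (σ : Subst) : Set Tm := {t | ∃ x ∈ σ.dom, σ x = t}

def Subst.isGround (σ : Subst) : Prop := ∀ x ∈ σ.dom, (σ x).isGround

/-- Injective substitution: distinct domain variables are mapped to distinct terms. -/
def Subst.inj (σ : Subst) : Prop := ∀ x ∈ σ.dom, ∀ y ∈ σ.dom, σ x = σ y → x = y

def Tm.subst (σ : Subst) : Tm → Tm
  | .var x => σ x
  | .app f n ts => .app f n (fun i => (ts i).subst σ)

/-- Substitution application to formulas (free occurrences of variables are replaced). -/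
def Fml.subst (σ : Subst) : Fml → Fml
  | .tru => .tru
  | .fls => .fls
  | .atom p n ts => .atom p n (fun i => (ts i).subst σ)
  | .neg F => .neg (F.subst σ)
  | .conj F G => .conj (F.subst σ) (G.subst σ)
  | .disj F G => .disj (F.subst σ) (G.subst σ)
  | .all x F => .all x (F.subst (Function.update σ x (Tm.var x)))
  | .exi x F => .exi x (F.subst (Function.update σ x (Tm.var x)))

/-- Inverse application of an injective substitution to a term:
all rng(σ)-maximal occurrences of terms in the range of σ are replaced by
the corresponding domain variable. -/
noncomputable def Tm.inv (σ : Subst) : Tm → Tm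
  | .var x =>
      if h : ∃ v ∈ Subst.dom σ, σ v = Tm.var x then Tm.var h.choose else Tm.var x
  | .app f n ts =>
      if h : ∃ v ∈ Subst.dom σ, σ v = Tm.app f n ts then Tm.var h.choose
      else .app f n (fun i => Tm.inv σ (ts i))

/-- Inverse application of an injective substitution to a formula. -/
noncomputable def Fml.inv (σ : Subst) : Fml → Fml
  | .tru => .tru
  | .fls => .fls
  | .atom p n ts => .atom p n (fun i => Tm.inv σ (ts i))
  | .neg F => .neg (F.inv σ)
  | .conj F G => .conj (F.inv σ) (G.inv σ)
  | .disj F G => .disj (F.inv σ) (G.inv σ)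
  | .all x F => .all x (F.inv σ)
  | .exi x F => .exi x (F.inv σ)

/-- `H` is a Craig-Lyndon interpolant of `F` and `G`. -/
def CLInterp (F G H : Fml) : Prop :=
  entails F H ∧ entails H G ∧
  H.pred ⊆ F.pred ∩ G.pred ∧
  H.funs ⊆ F.funs ∩ G.funs ∧
  H.free ⊆ F.free ∩ G.free

/-- `H` is a Craig interpolant of `F` and `G` (no polarity constraint). -/
def CraigInterp (F G H : Fml) : Prop :=
  entails F H ∧ entails H G ∧
  H.predSyms ⊆ F.predSyms ∩ G.predSyms ∧
  H.funs ⊆ F.funs ∩ G.funs ∧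
  H.free ⊆ F.free ∩ G.free

/-- An S-term: a term whose outermost function symbol is in `S`. -/
def isSTerm (S : Set (ℕ × ℕ)) : Tm → Prop
  | .var _ => False
  | .app f n _ => (f, n) ∈ S

def STerms (S : Set (ℕ × ℕ)) : Set Tm := {t | isSTerm S t}

/-- `t` has a `T`-maximal occurrence in the given term: an occurrence that is
not within an occurrence of another member of `T`. -/
def Tm.hasMaxOcc (T : Set Tm) (t : Tm) : Tm → Prop
  | .var x => Tm.var x ∈ T ∧ t = Tm.var x
  | .app f n ts =>
      (Tm.app f n ts ∈ T ∧ t = Tm.app f n ts) ∨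
      (Tm.app f n ts ∉ T ∧ ∃ i, Tm.hasMaxOcc T t (ts i))

/-- `t` has a `T`-maximal occurrence in the formula. -/
def Fml.hasMaxOcc (T : Set Tm) (t : Tm) : Fml → Prop
  | .tru => False
  | .fls => False
  | .atom _ _ ts => ∃ i, Tm.hasMaxOcc T t (ts i)
  | .neg F => F.hasMaxOcc T t
  | .conj F G => F.hasMaxOcc T t ∨ G.hasMaxOcc T t
  | .disj F G => F.hasMaxOcc T t ∨ G.hasMaxOcc T t
  | .all _ F => F.hasMaxOcc T t
  | .exi _ F => F.hasMaxOcc T t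

/-- Universal quantification over a list of variables. -/
def alls (xs : List ℕ) (F : Fml) : Fml := xs.foldr Fml.all F

end CTIF
namespace CTIF

/-- `M'` agrees with `M` except possibly in the interpretation of the function
symbols (with arity) in `S`. -/
def agreeExcept {D : Type} (M M' : Struc D) (S : Set (ℕ × ℕ)) : Prop :=
  M'.pr = M.pr ∧ ∀ g n, (g, n) ∉ S → M'.fn g n = M.fn g n

/-- Interpolant lifting base ⟨F, G, 𝔽, 𝔾, H_grd, F_exp, G_exp, θ⟩
(Definition of "interpolant lifting base"). -/
def IsLiftBase (F G : Fml) (FS GS : Set (ℕ × ℕ)) (Hg Fe Ge : Fml) (θ : Subst) : Prop :=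
  F.isSentence ∧ G.isSentence ∧
  FS ∩ GS = ∅ ∧
  Hg.isGround ∧ Fe.isQF ∧ Ge.isQF ∧ Subst.isGround θ ∧
  -- (i)  F ⊨ ∃𝔽 ∀u F_exp, semantically via expansions:
  (∀ (D : Type), Nonempty D → ∀ M : Struc D, (∀ a, F.sat M a) →
    ∃ M' : Struc D, agreeExcept M M' FS ∧ ∀ a, Fe.sat M' a) ∧
  -- (i') ∀𝔾 ∃v G_exp ⊨ G, semantically via reinterpretations:
  (∀ (D : Type), Nonempty D → ∀ M : Struc D,
    (∀ M' : Struc D, agreeExcept M M' GS → ∃ a, Ge.sat M' a) → ∀ a, G.sat M a) ∧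
  -- (ii), (ii')
  Fe.pred ⊆ F.pred ∧ Ge.pred ⊆ G.pred ∧
  -- (iii), (iii')
  Fe.funs ⊆ (F.funs ∩ G.funs) ∪ FS ∧ Ge.funs ⊆ (F.funs ∩ G.funs) ∪ GS ∧
  -- (iv), (iv')
  F.funs ∩ GS = ∅ ∧ G.funs ∩ FS = ∅ ∧
  -- (v)
  Subst.dom θ = Fe.free ∪ Ge.free ∧
  -- (vi)
  (∃ c₀ : ℕ, (c₀, 0) ∈ FS ∪ GS ∧
    ∀ x ∈ Subst.dom θ, (θ x).funs ⊆ Fe.funs ∪ Ge.funs ∪ {(c₀, 0)}) ∧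
  -- (vii)
  CLInterp (Fe.subst θ) (Ge.subst θ) Hg

/-- The lifted formula Q₁v₁ … Qₙvₙ body, where Qᵢ = ∃ if tᵢ is an 𝔽-term
(its outermost symbol is in `FS`) and Qᵢ = ∀ otherwise. -/
noncomputable def lifted (n : ℕ) (v : Fin n → ℕ) (tl : Fin n → Tm)
    (FS : Set (ℕ × ℕ)) (body : Fml) : Fml :=
  (List.finRange n).foldr
    (fun i acc => if isSTerm FS (tl i) then Fml.exi (v i) acc else Fml.all (v i) acc)
    body

end CTIF

/-!
Take `M ⊨ F` and an expansion `M'` of `M` with `M' ⊨ ∀u F_exp`, and read the quantifier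
prefix as a game. Whatever values `dd` the universal player picks for the 𝔾-terms `tᵢ`,
reinterpret the 𝔾-symbols of `M'` on `D × Tm`, where values carry the term they denote, so
that each 𝔾-term `tᵢ` denotes `dd i`. No 𝔾-symbol occurs in F_exp, so this structure still
satisfies `∀u F_exp`, hence F_exp θ and the ground interpolant H_grd. Replacing every `tᵢ`
by `vᵢ` and forgetting the tags (H_grd⁻σ contains no 𝔽- or 𝔾-symbol) yields H_grd⁻σ in `M`
when each `vᵢ` takes the value of `tᵢ`. The existential player answers with the value of the
𝔽-term `tᵢ`, which only depends on its 𝔾-subterms, and these come earlier in the prefix.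
-/

namespace CTIF

instance : Nonempty Tm := ⟨.var 0⟩

section Semantics

variable {D E : Type}

theorem Tm.eval_congr (M : Struc D) {a a' : ℕ → D} :
    ∀ t : Tm, (∀ x ∈ t.vars, a x = a' x) → t.eval M a = t.eval M a'
  | .var x, h => h x rfl
  | .app f k ts, h => by
    simp only [Tm.vars, Set.mem_iUnion] at h
    simp only [Tm.eval]
    congr 1
    exact funext fun i => Tm.eval_congr M (ts i) fun x hx => h x ⟨i, hx⟩

theorem Fml.sat_congr (M : Struc D) :
    ∀ (φ : Fml) {a a' : ℕ → D}, (∀ x ∈ φ.free, a x = a' x) → (φ.sat M a ↔ φ.sat M a')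
  | .tru, _, _, _ | .fls, _, _, _ => Iff.rfl
  | .atom p k ts, a, a', h => by
    simp only [Fml.free, Set.mem_iUnion] at h
    simp only [Fml.sat]
    rw [funext fun i => Tm.eval_congr M (ts i) fun x hx => h x ⟨i, hx⟩]
  | .neg φ, _, _, h => not_congr (φ.sat_congr M h)
  | .conj φ ψ, _, _, h | .disj φ ψ, _, _, h => by
    simp only [Fml.free, Set.mem_union] at h
    simp only [Fml.sat]
    rw [φ.sat_congr M fun x hx => h x (.inl hx), ψ.sat_congr M fun x hx => h x (.inr hx)]
  | .all y φ, a, a', h | .exi y φ, a, a', h => by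
    have hupd (d : D) : ∀ x ∈ φ.free, Function.update a y d x = Function.update a' y d x := by
      intro x hx
      by_cases hxy : x = y
      · simp [hxy]
      · simp only [Function.update_of_ne hxy]
        exact h x ⟨hx, hxy⟩
    simp only [Fml.sat, fun d => φ.sat_congr M (hupd d)]

theorem Fml.sat_of_isSentence {M : Struc D} {φ : Fml} (hφ : φ.isSentence) {a : ℕ → D}
    (h : φ.sat M a) (a' : ℕ → D) : φ.sat M a' :=
  (φ.sat_congr M fun x hx => absurd (hφ ▸ hx : x ∈ (∅ : Set ℕ)) id).1 h

theorem Tm.eval_subst (M : Struc D) (τ : Subst) (a : ℕ → D) :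
    ∀ t : Tm, (t.subst τ).eval M a = t.eval M fun x => (τ x).eval M a
  | .var _ => rfl
  | .app f k ts => by
    simp only [Tm.subst, Tm.eval]
    exact congrArg _ (funext fun i => (ts i).eval_subst M τ a)

theorem Fml.sat_subst_of_isQF (M : Struc D) (τ : Subst) (a : ℕ → D) :
    ∀ φ : Fml, φ.isQF → ((φ.subst τ).sat M a ↔ φ.sat M fun x => (τ x).eval M a)
  | .tru, _ | .fls, _ => Iff.rfl
  | .atom p k ts, _ => by
    simp only [Fml.subst, Fml.sat, Tm.eval_subst]
  | .neg φ, h => not_congr (φ.sat_subst_of_isQF M τ a h)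
  | .conj φ ψ, h => and_congr (φ.sat_subst_of_isQF M τ a h.1) (ψ.sat_subst_of_isQF M τ a h.2)
  | .disj φ ψ, h => or_congr (φ.sat_subst_of_isQF M τ a h.1) (ψ.sat_subst_of_isQF M τ a h.2)

def IsStrongHomOutside (W : Struc E) (M : Struc D) (π : E → D) (S : Set (ℕ × ℕ)) : Prop :=
  (∀ f k x, (f, k) ∉ S → π (W.fn f k x) = M.fn f k (π ∘ x)) ∧
    ∀ p k x, W.pr p k x ↔ M.pr p k (π ∘ x)

namespace IsStrongHomOutside

variable {W : Struc E} {M : Struc D} {π : E → D} {S : Set (ℕ × ℕ)}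

theorem eval (h : IsStrongHomOutside W M π S) (b : ℕ → E) :
    ∀ t : Tm, Disjoint t.funs S → π (t.eval W b) = t.eval M (π ∘ b)
  | .var _, _ => rfl
  | .app f k ts, ht => by
    simp only [Tm.funs, Set.disjoint_insert_left, Set.disjoint_iUnion_left] at ht
    simp only [Tm.eval]
    rw [h.1 f k _ ht.1]
    exact congrArg _ (funext fun i => h.eval b (ts i) (ht.2 i))

theorem sat_iff (h : IsStrongHomOutside W M π S) (hπ : Function.Surjective π) :
    ∀ (φ : Fml) (b : ℕ → E), Disjoint φ.funs S → (φ.sat W b ↔ φ.sat M (π ∘ b))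
  | .tru, _, _ | .fls, _, _ => Iff.rfl
  | .atom p k ts, b, hφ => by
    simp only [Fml.funs, Set.disjoint_iUnion_left] at hφ
    simp only [Fml.sat, h.2]
    exact iff_of_eq (congrArg _ (funext fun i => h.eval b (ts i) (hφ i)))
  | .neg φ, b, hφ => not_congr (h.sat_iff hπ φ b hφ)
  | .conj φ ψ, b, hφ => by
    rw [Fml.funs, Set.disjoint_union_left] at hφ
    exact and_congr (h.sat_iff hπ φ b hφ.1) (h.sat_iff hπ ψ b hφ.2)
  | .disj φ ψ, b, hφ => by
    rw [Fml.funs, Set.disjoint_union_left] at hφ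
    exact or_congr (h.sat_iff hπ φ b hφ.1) (h.sat_iff hπ ψ b hφ.2)
  | .all x φ, b, hφ => by
    simp only [Fml.sat, hπ.forall (p := fun d => φ.sat M (Function.update (π ∘ b) x d)),
      ← Function.comp_update]
    exact forall_congr' fun e => h.sat_iff hπ φ _ hφ
  | .exi x φ, b, hφ => by
    simp only [Fml.sat, hπ.exists (p := fun d => φ.sat M (Function.update (π ∘ b) x d)),
      ← Function.comp_update]
    exact exists_congr fun e => h.sat_iff hπ φ _ hφ

theorem comp {F : Type} {V : Struc F} {ρ : F → E} {S' : Set (ℕ × ℕ)}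
    (h : IsStrongHomOutside W M π S) (h' : IsStrongHomOutside V W ρ S') :
    IsStrongHomOutside V M (π ∘ ρ) (S ∪ S') :=
  ⟨fun f k x hfk => by
    rw [Set.mem_union, not_or] at hfk
    simp only [Function.comp_apply, h'.1 f k x hfk.2, h.1 f k _ hfk.1, Function.comp_assoc],
   fun p k x => (h'.2 p k x).trans (h.2 p k _)⟩

end IsStrongHomOutside

theorem agreeExcept.isStrongHomOutside {M M' : Struc D} {S : Set (ℕ × ℕ)}
    (h : agreeExcept M M' S) : IsStrongHomOutside M' M id S :=
  ⟨fun f k x hfk => by rw [h.2 f k hfk]; rfl, fun p k x => by rw [h.1]; rfl⟩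

end Semantics

section Override

variable {D : Type}

/-- The second component tags every value with the term it denotes, so that `ρ` can
prescribe the value of each ground term separately. -/
def Struc.override (M : Struc D) (ρ : Tm → Option D) : Struc (D × Tm) where
  fn f k x :=
    ((ρ (.app f k (Prod.snd ∘ x))).getD (M.fn f k (Prod.fst ∘ x)), .app f k (Prod.snd ∘ x))
  pr p k x := M.pr p k (Prod.fst ∘ x)

variable (M : Struc D) {ρ : Tm → Option D} {b : ℕ → D × Tm}

theorem Struc.override_fn (f k : ℕ) (x : Fin k → D × Tm) :
    (M.override ρ).fn f k x =
      ((ρ (.app f k (Prod.snd ∘ x))).getD (M.fn f k (Prod.fst ∘ x)), .app f k (Prod.snd ∘ x)) :=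
  rfl

theorem Struc.override_isStrongHomOutside {S : Set (ℕ × ℕ)}
    (hρ : ∀ f k ts, (f, k) ∉ S → ρ (.app f k ts) = none) :
    IsStrongHomOutside (M.override ρ) M Prod.fst S :=
  ⟨fun f k x hfk => by simp [Struc.override, hρ f k _ hfk], fun _ _ _ => Iff.rfl⟩

theorem Struc.eval_override_snd (hb : ∀ x, (b x).2 = .var x) :
    ∀ t : Tm, (t.eval (M.override ρ) b).2 = t
  | .var x => hb x
  | .app f k ts => by
    simp only [Tm.eval, Struc.override_fn, Tm.app.injEq, heq_eq_eq, true_and]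
    exact funext fun i => Struc.eval_override_snd hb (ts i)

theorem Struc.eval_override_of_eq_some (hb : ∀ x, (b x).2 = .var x) {f k : ℕ}
    {ts : Fin k → Tm} {d : D} (hd : ρ (.app f k ts) = some d) :
    ((Tm.app f k ts).eval (M.override ρ) b).1 = d := by
  have hts : (Prod.snd ∘ fun i => (ts i).eval (M.override ρ) b) = ts :=
    funext fun i => M.eval_override_snd hb (ts i)
  simp only [Tm.eval, Struc.override_fn, hts, hd, Option.getD_some]

theorem Struc.eval_override_congr (hb : ∀ x, (b x).2 = .var x) {ρ' : Tm → Option D} :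
    ∀ t : Tm, (∀ s, s.occursIn t → ρ s = ρ' s) →
      t.eval (M.override ρ) b = t.eval (M.override ρ') b
  | .var _, _ => rfl
  | .app f k ts, h => by
    have hargs : (fun i => (ts i).eval (M.override ρ) b) = fun i => (ts i).eval (M.override ρ') b :=
      funext fun i => Struc.eval_override_congr hb (ts i) fun s hs => h s (.inr ⟨i, hs⟩)
    have hts : (Prod.snd ∘ fun i => (ts i).eval (M.override ρ') b) = ts :=
      funext fun i => M.eval_override_snd hb (ts i)
    simp only [Tm.eval, hargs, Struc.override_fn, hts, h _ (.inl rfl)]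

end Override

section Inverse

variable (σ : Subst)

theorem Tm.subst_inv : ∀ s : Tm, s.vars = ∅ → (s.inv σ).subst σ = s
  | .var x, hs => absurd hs (Set.singleton_ne_empty x)
  | .app f k ts, hs => by
    rw [Tm.inv]
    split_ifs with h
    · exact h.choose_spec.2
    · simp only [Tm.vars, Set.iUnion_eq_empty] at hs
      simp only [Tm.subst, Tm.app.injEq, heq_eq_eq, true_and]
      exact funext fun i => (ts i).subst_inv (hs i)

theorem Fml.isQF_inv : ∀ φ : Fml, φ.isQF → (φ.inv σ).isQF
  | .tru, _ | .fls, _ | .atom _ _ _, _ => trivial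
  | .neg φ, h => φ.isQF_inv h
  | .conj φ ψ, h | .disj φ ψ, h => ⟨φ.isQF_inv h.1, ψ.isQF_inv h.2⟩

theorem Fml.subst_inv : ∀ φ : Fml, φ.isQF → φ.free = ∅ → (φ.inv σ).subst σ = φ
  | .tru, _, _ | .fls, _, _ => rfl
  | .atom p k ts, _, h => by
    simp only [Fml.free, Set.iUnion_eq_empty] at h
    simp only [Fml.inv, Fml.subst, Fml.atom.injEq, heq_eq_eq, true_and]
    exact funext fun i => (ts i).subst_inv σ (h i)
  | .neg φ, hq, h => congrArg Fml.neg (φ.subst_inv hq h)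
  | .conj φ ψ, hq, h | .disj φ ψ, hq, h => by
    rw [Fml.free, Set.union_empty_iff] at h
    simp only [Fml.inv, Fml.subst, φ.subst_inv hq.1 h.1, ψ.subst_inv hq.2 h.2]

theorem Fml.sat_inv_of_isGround {D : Type} (M : Struc D) {φ : Fml} (hφ : φ.isGround)
    {b : ℕ → D} (h : φ.sat M b) : (φ.inv σ).sat M fun x => (σ x).eval M b := by
  rwa [← Fml.sat_subst_of_isQF M σ b _ (φ.isQF_inv σ hφ.1), φ.subst_inv σ hφ.1 hφ.2]

variable {σ} {S : Set (ℕ × ℕ)}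

theorem Tm.disjoint_funs_inv : ∀ s : Tm,
    (∀ t ∈ STerms S, Tm.hasMaxOcc (STerms S) t s → t ∈ σ.rng) → Disjoint (s.inv σ).funs S
  | .var x, _ => by
    rw [Tm.inv]
    split_ifs <;> exact Set.empty_disjoint S
  | .app f k ts, h => by
    rw [Tm.inv]
    split_ifs with hrng
    · exact Set.empty_disjoint S
    · have hfk : (f, k) ∉ S := fun hfk => hrng (h _ hfk (.inl ⟨hfk, rfl⟩))
      rw [Tm.funs, Set.disjoint_insert_left, Set.disjoint_iUnion_left]
      exact ⟨hfk, fun i => (ts i).disjoint_funs_inv fun t ht hocc =>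
        h t ht (.inr ⟨hfk, i, hocc⟩)⟩

theorem Fml.disjoint_funs_inv : ∀ φ : Fml,
    (∀ t ∈ STerms S, Fml.hasMaxOcc (STerms S) t φ → t ∈ σ.rng) → Disjoint (φ.inv σ).funs S
  | .tru, _ | .fls, _ => Set.empty_disjoint S
  | .atom _ _ ts, h => Set.disjoint_iUnion_left.2 fun i =>
    (ts i).disjoint_funs_inv fun t ht hocc => h t ht ⟨i, hocc⟩
  | .neg φ, h | .all _ φ, h | .exi _ φ, h => φ.disjoint_funs_inv h
  | .conj φ ψ, h | .disj φ ψ, h => Set.disjoint_union_left.2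
    ⟨φ.disjoint_funs_inv fun t ht hocc => h t ht (.inl hocc),
     ψ.disjoint_funs_inv fun t ht hocc => h t ht (.inr hocc)⟩

end Inverse

section Strategy

variable {D : Type}

theorem lifted_succ (n : ℕ) (v : Fin (n + 1) → ℕ) (tl : Fin (n + 1) → Tm) (FS : Set (ℕ × ℕ))
    (body : Fml) :
    lifted (n + 1) v tl FS body =
      if isSTerm FS (tl 0) then .exi (v 0) (lifted n (v ∘ Fin.succ) (tl ∘ Fin.succ) FS body)
      else .all (v 0) (lifted n (v ∘ Fin.succ) (tl ∘ Fin.succ) FS body) := by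
  simp only [lifted, List.finRange_succ, List.foldr_cons, List.foldr_map, Function.comp_apply]

theorem sat_lifted_of_strategy [Nonempty D] (M : Struc D) {n : ℕ} {v : Fin n → ℕ}
    (hv : Function.Injective v) (tl : Fin n → Tm) (FS : Set (ℕ × ℕ)) (body : Fml)
    (a : ℕ → D) (w : (Fin n → D) → Fin n → D)
    (hw_univ : ∀ dd i, ¬ isSTerm FS (tl i) → w dd i = dd i)
    (hw_exi : ∀ dd dd' i, isSTerm FS (tl i) → (∀ j < i, dd j = dd' j) → w dd i = w dd' i)
    (hbody : ∀ dd a', (∀ i, a' (v i) = w dd i) → (∀ x ∉ Set.range v, a' x = a x) →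
      body.sat M a') :
    (lifted n v tl FS body).sat M a := by
  induction n generalizing a with
  | zero => exact hbody Fin.elim0 a (fun i => i.elim0) fun _ _ => rfl
  | succ n ih =>
    have hrest (e : D) (he : ∀ dd, w (Fin.cons e dd) 0 = e) :
        (lifted n (v ∘ Fin.succ) (tl ∘ Fin.succ) FS body).sat M (Function.update a (v 0) e) := by
      refine ih (hv.comp (Fin.succ_injective n)) (tl ∘ Fin.succ) _
        (fun dd i => w (Fin.cons e dd) i.succ) (fun dd i hi => ?_)
        (fun dd dd' i hi hdd => hw_exi _ _ _ hi ?_)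
        fun dd a' hvi ha' => hbody (Fin.cons e dd) a' ?_ ?_
      · rw [hw_univ _ _ hi, Fin.cons_succ]
      · exact Fin.cases (fun _ => rfl) fun j hj => by
          simpa using hdd j (Fin.succ_lt_succ_iff.1 hj)
      · have hv0 : v 0 ∉ Set.range (v ∘ Fin.succ) := fun ⟨j, hj⟩ => Fin.succ_ne_zero j (hv hj)
        exact Fin.cases (by rw [ha' _ hv0, Function.update_self, he]) hvi
      · intro x hx
        have hx0 : x ≠ v 0 := fun h => hx ⟨0, h.symm⟩
        rw [ha' x fun ⟨j, hj⟩ => hx ⟨j.succ, hj⟩, Function.update_of_ne hx0]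
    rw [lifted_succ]
    split_ifs with h0
    · exact ⟨w (fun _ => Classical.arbitrary D) 0,
        hrest _ fun dd => hw_exi _ _ 0 h0 fun j hj => absurd hj (Fin.not_lt_zero j)⟩
    · exact fun e => hrest e fun dd => by rw [hw_univ _ _ h0, Fin.cons_zero]

end Strategy

theorem exists_eq_app_of_isSTerm {S : Set (ℕ × ℕ)} : ∀ {t : Tm}, isSTerm S t →
    ∃ f k ts, t = .app f k ts
  | .app f k ts, _ => ⟨f, k, ts, rfl⟩

theorem isSTerm_right_of_union {S S' : Set (ℕ × ℕ)} :
    ∀ {t : Tm}, isSTerm (S ∪ S') t → ¬ isSTerm S t → isSTerm S' t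
  | .app _ _ _, h, h' => h.resolve_left h'

theorem IsLiftBase.disjoint_funs_Fe {F G Hg Fe Ge : Fml} {FS GS : Set (ℕ × ℕ)} {θ : Subst}
    (h : IsLiftBase F G FS GS Hg Fe Ge θ) : Disjoint Fe.funs GS := by
  obtain ⟨-, -, hFSGS, -, -, -, -, -, -, -, -, hFeFuns, -, hFGS, -⟩ := h
  refine Set.disjoint_of_subset_left hFeFuns (Set.disjoint_union_left.2 ⟨?_, ?_⟩)
  · exact (Set.disjoint_iff_inter_eq_empty.2 hFGS).mono_left Set.inter_subset_left
  · exact Set.disjoint_iff_inter_eq_empty.2 hFSGS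

section Lifting

variable {D : Type} {n : ℕ} {tl : Fin n → Tm} {FS : Set (ℕ × ℕ)}

noncomputable def univOverride (tl : Fin n → Tm) (FS : Set (ℕ × ℕ)) (dd : Fin n → D) :
    Tm → Option D :=
  fun t => if h : ∃ j, ¬ isSTerm FS (tl j) ∧ tl j = t then some (dd h.choose) else none

theorem univOverride_tl (htl : Function.Injective tl) (dd : Fin n → D) {i : Fin n}
    (hi : ¬ isSTerm FS (tl i)) : univOverride tl FS dd (tl i) = some (dd i) := by
  have h : ∃ j, ¬ isSTerm FS (tl j) ∧ tl j = tl i := ⟨i, hi, rfl⟩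
  rw [univOverride, dif_pos h, htl h.choose_spec.2]

theorem univOverride_app_eq_none {GS : Set (ℕ × ℕ)}
    (hGS : ∀ j, ¬ isSTerm FS (tl j) → isSTerm GS (tl j)) (dd : Fin n → D) {f k : ℕ}
    (hfk : (f, k) ∉ GS) (ts : Fin k → Tm) : univOverride tl FS dd (.app f k ts) = none := by
  refine dif_neg fun ⟨j, hj, htj⟩ => hfk ?_
  have := hGS j hj
  rwa [htj] at this

theorem univOverride_congr
    (horder : ∀ i j, Tm.strictSub (tl i) (tl j) → i < j) {dd dd' : Fin n → D} {i : Fin n}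
    (hi : isSTerm FS (tl i)) (hdd : ∀ j < i, dd j = dd' j) (s : Tm) (hs : s.occursIn (tl i)) :
    univOverride tl FS dd s = univOverride tl FS dd' s := by
  unfold univOverride
  split_ifs with h
  · obtain ⟨hj, hjs⟩ := h.choose_spec
    have hne : tl h.choose ≠ tl i := fun heq => hj (heq ▸ hi)
    rw [hdd _ (horder _ _ ⟨hne, hjs.symm ▸ hs⟩)]
  · rfl

theorem sat_inv_of_override [Nonempty D] {M M' : Struc D} {GS : Set (ℕ × ℕ)}
    {Fe Hg : Fml} {θ σ : Subst} (hM' : agreeExcept M M' FS) (hFe : ∀ a, Fe.sat M' a)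
    (hFeQF : Fe.isQF) (hFeGS : Disjoint Fe.funs GS) (hEnt : entails (Fe.subst θ) Hg)
    (hHg : Hg.isGround) (hHgσ : Disjoint (Hg.inv σ).funs (FS ∪ GS)) {ρ : Tm → Option D}
    (hρ : ∀ f k ts, (f, k) ∉ GS → ρ (.app f k ts) = none) (b : ℕ → D × Tm) :
    (Hg.inv σ).sat M (Prod.fst ∘ fun x => (σ x).eval (M'.override ρ) b) := by
  have hW := M'.override_isStrongHomOutside hρ
  have hFeW (b' : ℕ → D × Tm) : Fe.sat (M'.override ρ) b' :=
    (hW.sat_iff Prod.fst_surjective Fe b' hFeGS).2 (hFe _)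
  have hHgW : Hg.sat (M'.override ρ) b :=
    hEnt _ inferInstance _ b ((Fml.sat_subst_of_isQF _ θ b Fe hFeQF).2 (hFeW _))
  exact ((hM'.isStrongHomOutside.comp hW).sat_iff Prod.fst_surjective _ _ hHgσ).1
    (Hg.sat_inv_of_isGround σ _ hHg hHgW)

end Lifting

/-- Interpolant lifting: given the first five components F, G, 𝔽, 𝔾, H_grd of an
interpolant lifting base (whose remaining components F_exp, G_exp, θ exist), let
t₁,…,tₙ be the 𝔽𝔾-terms with an 𝔽𝔾-terms-maximal occurrence in H_grd, listed so
that strict subterms come first, let v₁,…,vₙ be fresh (distinct) variables, let σ be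
the injective substitution vᵢ ↦ tᵢ, and let Qᵢ = ∃ if tᵢ is an 𝔽-term and Qᵢ = ∀ if
it is a 𝔾-term.  Conclusion: Q₁v₁ … Qₙvₙ H_grd⁻σ relates to F and G as stated. -/
theorem statement13 (F G : Fml) (FS GS : Set (ℕ × ℕ)) (Hg Fe Ge : Fml) (θ : Subst)
    (hbase : IsLiftBase F G FS GS Hg Fe Ge θ)
    (n : ℕ) (tl : Fin n → Tm)
    (htl_inj : Function.Injective tl)
    (htl_range : ∀ t : Tm, (∃ i, tl i = t) ↔
      (isSTerm (FS ∪ GS) t ∧ Fml.hasMaxOcc (STerms (FS ∪ GS)) t Hg))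
    (horder : ∀ i j, Tm.strictSub (tl i) (tl j) → i < j)
    (v : Fin n → ℕ) (hv : Function.Injective v)
    (σ : Subst)
    (hσ : ∀ i, σ (v i) = tl i)
    (hσ' : ∀ x : ℕ, (∀ i, v i ≠ x) → σ x = Tm.var x) :
    entails F (lifted n v tl FS (Fml.inv σ Hg)) := by
  intro D hD M a hF
  have hFeGS := hbase.disjoint_funs_Fe
  obtain ⟨hFsen, -, -, hHg, hFeQF, -, -, hexp, -, -, -, -, -, -, -, -, -, hEnt, -⟩ := hbase
  obtain ⟨M', hM', hFe⟩ := hexp D hD M (Fml.sat_of_isSentence hFsen hF)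
  have htl_GS (i : Fin n) : ¬ isSTerm FS (tl i) → isSTerm GS (tl i) :=
    isSTerm_right_of_union ((htl_range _).1 ⟨i, rfl⟩).1
  have hHgσ : Disjoint (Hg.inv σ).funs (FS ∪ GS) := by
    refine Fml.disjoint_funs_inv Hg fun t ht hocc => ?_
    obtain ⟨i, rfl⟩ := (htl_range t).2 ⟨ht, hocc⟩
    obtain ⟨f, k, ts, hts⟩ := exists_eq_app_of_isSTerm ht
    exact ⟨v i, by simp [Subst.dom, hσ, hts], hσ i⟩
  let b₀ : ℕ → D × Tm := fun x => (a x, .var x)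
  refine sat_lifted_of_strategy M hv tl FS _ a
    (fun dd i => ((tl i).eval (M'.override (univOverride tl FS dd)) b₀).1)
    (fun dd i hi => ?_) (fun dd dd' i hi hdd => ?_) fun dd a' hvi ha' => ?_
  · obtain ⟨f, k, ts, hts⟩ := exists_eq_app_of_isSTerm (htl_GS i hi)
    exact hts ▸ M'.eval_override_of_eq_some (fun _ => rfl) (hts ▸ univOverride_tl htl_inj dd hi)
  · exact congrArg Prod.fst (M'.eval_override_congr (fun _ => rfl) _
      (univOverride_congr horder hi hdd))
  · convert sat_inv_of_override hM' hFe hFeQF hFeGS hEnt hHg hHgσ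
      (fun f k ts hfk => univOverride_app_eq_none htl_GS dd hfk ts) b₀
    funext x
    by_cases hx : x ∈ Set.range v
    · obtain ⟨i, rfl⟩ := hx
      rw [hvi, Function.comp_apply, hσ]
    · rw [ha' x hx, Function.comp_apply, hσ' x fun i hi => hx ⟨i, hi⟩]
      rfl

end CTIF
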